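/- For any coweight λ = v(λ^{++}) ∈ Y⁺ and any w ∈ Wᵛ: #{α ∈ Inv(w⁻¹) : ⟨λ,α⟩ ≥ 0} − #{α ∈ Inv(w⁻¹) : ⟨λ,α⟩ < 0} = ℓ_{v^λ}(w) = ℓ((v^λ)⁻¹w) − ℓ(v^λ). Consequently the affine length satisfies ℓᵃ(π^λ w) = 2ht(λ^{++}) + ℓ_{v^λ}(w). -/

import Mathlib

/-- Sign of an integer, with the convention `isgn 0 = 1`. -/
def isgn (n : ℤ) : ℤ := if 0 ≤ n then 1 else -1

/-- A Kac–Moody root datum: a finite index set `I`, a generalized Cartan matrix `A`,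
free `ℤ`-modules `X` and `Y` of finite rank in perfect duality `pairE`, and linearly
independent families of simple roots `α` and simple coroots `αv` with
`⟨αv i, α j⟩ = A i j`. -/
structure KM (I X Y : Type*) [Fintype I] [AddCommGroup X] [AddCommGroup Y] where
  A : I → I → ℤ
  pairE : Y ≃+ (X →+ ℤ)
  α : I → X
  αv : I → Y
  pair_av_a : ∀ i j, pairE (αv i) (α j) = A i j
  A_diag : ∀ i, A i i = 2
  A_offdiag : ∀ i j, i ≠ j → A i j ≤ 0
  A_zero_iff : ∀ i j, A i j = 0 → A j i = 0
  freeX : Module.Free ℤ X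
  freeY : Module.Free ℤ Y
  finX : Module.Finite ℤ X
  finY : Module.Finite ℤ Y
  indep_α : LinearIndependent ℤ α
  indep_αv : LinearIndependent ℤ αv

/-- The multiplicative group structure on `AddAut A` (composition), as in the older Mathlib. -/
instance addAutGroupOld (A : Type*) [Add A] : Group (AddAut A) where
  mul g h := AddEquiv.trans h g
  one := AddEquiv.refl _
  inv := AddEquiv.symm
  mul_assoc _ _ _ := rfl
  one_mul _ := rfl
  mul_one _ := rfl
  inv_mul_cancel := AddEquiv.self_trans_symm

namespace KM

variable {I X Y : Type*} [Fintype I] [AddCommGroup X] [AddCommGroup Y] (D : KM I X Y)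

open scoped Classical

/-- The duality pairing `⟨y, x⟩`. -/
def pr (y : Y) (x : X) : ℤ := D.pairE y x

/-- Underlying function of the simple reflection `s_i` on `X`. -/
def sXfun (i : I) (x : X) : X := x - D.pr (D.αv i) x • D.α i

lemma sX_invol (i : I) : Function.Involutive (D.sXfun i) := by
  intro x
  have h2 : D.pairE (D.αv i) (D.α i) = 2 := by rw [D.pair_av_a, D.A_diag]
  show (x - D.pairE (D.αv i) x • D.α i) -
      D.pairE (D.αv i) (x - D.pairE (D.αv i) x • D.α i) • D.α i = x
  rw [map_sub, map_zsmul, h2, smul_eq_mul]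
  have h : D.pairE (D.αv i) x - D.pairE (D.αv i) x * 2 = -(D.pairE (D.αv i) x) := by ring
  rw [h, neg_smul]
  abel

/-- The simple reflection `s_i : x ↦ x - ⟨αv i, x⟩ • α i` as an automorphism of `X`. -/
def sX (i : I) : AddAut X :=
  AddEquiv.mk' (D.sX_invol i).toPerm (by
    intro x y
    show ((x + y) - D.pairE (D.αv i) (x + y) • D.α i)
        = (x - D.pairE (D.αv i) x • D.α i) + (y - D.pairE (D.αv i) y • D.α i)
    rw [map_add, add_smul]
    abel)

/-- The vectorial Weyl group `Wᵛ`, as the subgroup of `AddAut X` generated by the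
simple reflections. -/
def Wg : Subgroup (AddAut X) := Subgroup.closure (Set.range D.sX)

/-- The contragredient action of an automorphism `f` of `X` on `Y`; it is characterized by
`⟨actY f y, x⟩ = ⟨y, f⁻¹ x⟩`. -/
def actY (f : AddAut X) (y : Y) : Y :=
  D.pairE.symm ((D.pairE y).comp (AddEquiv.toAddMonoidHom (AddEquiv.symm f)))

/-- The set of real roots `Φ = Wᵛ · {α i}`. -/
def Phi : Set X := {x | ∃ p : AddAut X × I, p.1 ∈ D.Wg ∧ x = p.1 (D.α p.2)}

/-- The set of positive real roots `Φ₊`. -/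
def PhiPos : Set X := {x | x ∈ D.Phi ∧ ∃ c : I → ℕ, x = ∑ i, (c i : ℤ) • D.α i}

/-- The set of negative real roots `Φ₋ = -Φ₊`. -/
def PhiNeg : Set X := {x | -x ∈ D.PhiPos}

/-- The coroot `β^∨` of a real root `β`: if `β = w (α i)` then `β^∨ = w (αv i)`
(this is independent of the chosen expression). -/
noncomputable def coroot (x : X) : Y :=
  if h : ∃ p : AddAut X × I, p.1 ∈ D.Wg ∧ x = p.1 (D.α p.2) then
    D.actY h.choose.1 (D.αv h.choose.2)
  else 0

/-- The reflection `s_β` associated to a real root `β`: if `β = w (α i)` then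
`s_β = w s_i w⁻¹` (independent of the chosen expression). -/
noncomputable def srefl (x : X) : AddAut X :=
  if h : ∃ p : AddAut X × I, p.1 ∈ D.Wg ∧ x = p.1 (D.α p.2) then
    h.choose.1 * D.sX h.choose.2 * h.choose.1⁻¹
  else 1

/-- The integral fundamental chamber `Y^{++}` of dominant coweights. -/
def Ypp : Set Y := {y | ∀ i, 0 ≤ D.pr y (D.α i)}

/-- The integral Tits cone `Y⁺ = Wᵛ · Y^{++}`. -/
def Yplus : Set Y := {y | ∃ p : AddAut X × Y, p.1 ∈ D.Wg ∧ p.2 ∈ D.Ypp ∧ y = D.actY p.1 p.2}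

/-- The dominant representative `λ^{++}` of `λ ∈ Y⁺` (the unique dominant element of the
orbit `Wᵛ · λ`). -/
noncomputable def dompp (y : Y) : Y :=
  if h : ∃ p : AddAut X × Y, p.1 ∈ D.Wg ∧ p.2 ∈ D.Ypp ∧ y = D.actY p.1 p.2 then
    h.choose.2
  else y

/-- The inversion set `Inv(w) = {α ∈ Φ₊ | w α ∈ Φ₋}`. -/
def invSet (w : AddAut X) : Set X := {a | a ∈ D.PhiPos ∧ w a ∈ D.PhiNeg}

/-- The Bruhat length `ℓ(w) = |Inv(w)|`. -/
noncomputable def len (w : AddAut X) : ℕ := (D.invSet w).ncard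

/-- The relative length `ℓ_v(w) = |Inv(w⁻¹)∖Inv(v⁻¹)| − |Inv(w⁻¹)∩Inv(v⁻¹)|`. -/
noncomputable def rlen (v w : AddAut X) : ℤ :=
  ((D.invSet w⁻¹ \ D.invSet v⁻¹).ncard : ℤ) - ((D.invSet w⁻¹ ∩ D.invSet v⁻¹).ncard : ℤ)

/-- `v^λ`: the minimal-length element of `Wᵛ` sending `λ^{++}` to `λ`. -/
noncomputable def vmin (l : Y) : AddAut X :=
  if h : ∃ w : AddAut X, w ∈ D.Wg ∧ D.actY w (D.dompp l) = l ∧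
      ∀ w' : AddAut X, w' ∈ D.Wg → D.actY w' (D.dompp l) = l → D.len w ≤ D.len w'
  then h.choose else 1

/-- The set of reflections of `Wᵛ`. -/
def reflections : Set (AddAut X) := {r | ∃ b ∈ D.PhiPos, r = D.srefl b}

/-- One step of the Bruhat order on `Wᵛ`. -/
def vectStep (u u' : AddAut X) : Prop :=
  ∃ r ∈ D.reflections, u' = u * r ∧ D.len u < D.len u'

/-- The Bruhat order on `Wᵛ`. -/
def vlt : AddAut X → AddAut X → Prop := Relation.TransGen D.vectStep

/-- One step of the relative Bruhat order `<_v` on `Wᵛ`. -/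
def rvStep (v u u' : AddAut X) : Prop :=
  ∃ r ∈ D.reflections, u' = u * r ∧ D.rlen v u < D.rlen v u'

/-- The relative Bruhat order `<_v` on `Wᵛ`. -/
def rvlt (v : AddAut X) : AddAut X → AddAut X → Prop := Relation.TransGen (D.rvStep v)

/-- The stabilizer `W_λ` of `λ` in `Wᵛ`. -/
def Wstab (l : Y) : Set (AddAut X) := {u | u ∈ D.Wg ∧ D.actY u l = l}

/-- `v` is the minimal-length representative of its coset `v W_λ`. -/
def IsMinRep (l : Y) (v : AddAut X) : Prop :=
  v ∈ D.Wg ∧ ∀ u ∈ D.Wstab l, D.len v ≤ D.len (v * u)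

/-- The action of `π^λ w ∈ Y ⋊ Wᵛ` on affine roots:
`π^λ w (β + nπ) = w β + (n + ⟨λ, w β⟩)π`. -/
def affAct (a : Y × AddAut X) (r : X × ℤ) : X × ℤ :=
  (a.2 r.1, r.2 + D.pr a.1 (a.2 r.1))

/-- The set `Φᵃ₊` of positive affine roots. -/
def PhiAffPos : Set (X × ℤ) :=
  {r | r.1 ∈ D.Phi ∧ (0 < r.2 ∨ (r.2 = 0 ∧ r.1 ∈ D.PhiPos))}

/-- The affine root `β[n] = sgn(n)β + |n|π`. -/
def aroot (b : X) (n : ℤ) : X × ℤ := (isgn n • b, |n|)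

/-- The affine reflection `s_{β[n]} = π^{nβ^∨} s_β`, as an element of `Y ⋊ Wᵛ`. -/
noncomputable def saff (b : X) (n : ℤ) : Y × AddAut X := (n • D.coroot b, D.srefl b)

/-- Multiplication in the semidirect product `Y ⋊ Wᵛ`:
`π^λ w · π^μ v = π^{λ + w μ} (w v)`. -/
def mulA (a b : Y × AddAut X) : Y × AddAut X := (a.1 + D.actY a.2 b.1, a.2 * b.2)

/-- One step `x < x·s_{β[n]}` of the affine Bruhat order on `W⁺`, for `β ∈ Φ₊`, `n ∈ ℤ`,
requiring both elements to lie in `W⁺` and `x(β[n]) ∈ Φᵃ₊`. -/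
def astep (a b : Y × AddAut X) : Prop :=
  a.1 ∈ D.Yplus ∧ b.1 ∈ D.Yplus ∧ a.2 ∈ D.Wg ∧ b.2 ∈ D.Wg ∧
    ∃ g ∈ D.PhiPos, ∃ m : ℤ,
      D.affAct a (aroot (X := X) g m) ∈ D.PhiAffPos ∧ b = D.mulA a (D.saff g m)

/-- The (strict) affine Bruhat order on `W⁺`. -/
def alt : (Y × AddAut X) → (Y × AddAut X) → Prop := Relation.TransGen D.astep

/-- The affine Bruhat order on `W⁺`. -/
def ale (a b : Y × AddAut X) : Prop := a = b ∨ D.alt a b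

/-- `b` covers `a` for the affine Bruhat order: `a < b` and nothing lies strictly
between them. -/
def acovers (a b : Y × AddAut X) : Prop :=
  D.alt a b ∧ ∀ c, D.alt a c → D.alt c b → False

/-- `Λ` is a family of fundamental weights: `⟨αv i, Λ j⟩ = δ_{ij}`. -/
def IsFundWeights (Λ : I → X) : Prop :=
  ∀ i j, D.pr (D.αv i) (Λ j) = if i = j then 1 else 0

/-- The height `ht(λ) = ⟨λ, ρ⟩` where `ρ = Σ_i Λ_i`. -/
def ht (Λ : I → X) (l : Y) : ℤ := D.pr l (∑ i, Λ i)

/-- The affine length `ℓᵃ` with integral values. -/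
noncomputable def alen (Λ : I → X) (a : Y × AddAut X) : ℤ :=
  2 * D.ht Λ (D.dompp a.1) +
    ((({x | x ∈ D.invSet a.2⁻¹ ∧ 0 ≤ D.pr a.1 x}).ncard : ℤ) -
      (({x | x ∈ D.invSet a.2⁻¹ ∧ D.pr a.1 x < 0}).ncard : ℤ))

end KM

/-!
Write `v = v^λ` and `μ = λ^{++}`. Because `v` has minimal length among the elements sending `μ`
to `λ`, `Inv(v⁻¹)` is exactly the set of positive roots `b` with `⟨λ, b⟩ < 0`: a positive root `b`
with `⟨λ, b⟩ = 0` and `v⁻¹ b < 0` would give a reflection fixing `μ` and shortening `v`. So the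
signed count is `|Inv(w⁻¹) ∖ Inv(v⁻¹)| - |Inv(w⁻¹) ∩ Inv(v⁻¹)|`, and the decomposition
`Inv(w⁻¹ v) = v⁻¹ (Inv(w⁻¹) ∖ Inv(v⁻¹)) ⊔ -v⁻¹ (Inv(v⁻¹) ∖ Inv(w⁻¹))` turns it into
`ℓ(v⁻¹ w) - ℓ(v)`; the formula for `ℓᵃ` is then its definition.

Everything rests on the fact that each real root is either positive or negative. As for Coxeter
groups (Tits' lemma), this is proved by induction on the word length, reducing to the subgroups
generated by two simple reflections; there the coefficients of `s_i s_j ⋯ (α i)` obey a linear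
recursion, which stays nonnegative for ever when `A i j * A j i ≥ 4` and, in the four finite
types, up to the order given by the braid relation.
-/

namespace KM

section AltLetter

variable {I : Type*}

def altLetter (i j : I) (n : ℕ) : I := if n % 2 = 0 then i else j

lemma altLetter_succ (i j : I) (n : ℕ) : altLetter i j (n + 1) = altLetter j i n := by
  unfold altLetter
  rcases Nat.mod_two_eq_zero_or_one n with h | h <;> simp [Nat.add_mod, h]

lemma altLetter_eq_or (i j : I) (n : ℕ) :
    (altLetter i j n = i ∧ altLetter j i n = j) ∨ (altLetter i j n = j ∧ altLetter j i n = i) := by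
  unfold altLetter
  rcases Nat.mod_two_eq_zero_or_one n with h | h <;> simp [h]

end AltLetter

variable {I X Y : Type*} [Fintype I] [AddCommGroup X] [AddCommGroup Y] (D : KM I X Y)

section Basic

lemma aut_mul_apply (f g : AddAut X) (x : X) : (f * g) x = f (g x) := rfl

lemma aut_one_apply (x : X) : (1 : AddAut X) x = x := rfl

lemma aut_inv_apply_self (u : AddAut X) (x : X) : u⁻¹ (u x) = x := u.symm_apply_apply x

lemma aut_apply_inv_self (u : AddAut X) (x : X) : u (u⁻¹ x) = x := u.apply_symm_apply x

lemma pr_add (y : Y) (x z : X) : D.pr y (x + z) = D.pr y x + D.pr y z := map_add _ _ _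

lemma pr_sub (y : Y) (x z : X) : D.pr y (x - z) = D.pr y x - D.pr y z := map_sub _ _ _

lemma pr_neg (y : Y) (x : X) : D.pr y (-x) = - D.pr y x := map_neg _ _

lemma pr_zsmul (y : Y) (c : ℤ) (x : X) : D.pr y (c • x) = c * D.pr y x := map_zsmul _ _ _

lemma pr_alpha (i j : I) : D.pr (D.αv i) (D.α j) = D.A i j := D.pair_av_a i j

lemma pr_actY (f : AddAut X) (y : Y) (x : X) : D.pr (D.actY f y) x = D.pr y (f⁻¹ x) := by
  simp only [pr, actY, AddEquiv.apply_symm_apply, AddMonoidHom.comp_apply]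
  rfl

lemma actY_mul (f g : AddAut X) (y : Y) : D.actY (f * g) y = D.actY f (D.actY g y) := by
  apply D.pairE.injective
  ext x
  change D.pr _ x = D.pr _ x
  rw [pr_actY, pr_actY, pr_actY, mul_inv_rev]
  rfl

lemma sX_apply (i : I) (x : X) : D.sX i x = x - D.pr (D.αv i) x • D.α i := rfl

lemma sX_alpha_self (i : I) : D.sX i (D.α i) = - D.α i := by
  rw [sX_apply, pr_alpha, D.A_diag, two_smul]
  abel

lemma sX_mul_self (i : I) : D.sX i * D.sX i = 1 :=
  AddEquiv.ext (D.sX_invol i)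

lemma sX_inv (i : I) : (D.sX i)⁻¹ = D.sX i :=
  inv_eq_of_mul_eq_one_left (D.sX_mul_self i)

lemma sX_mem (i : I) : D.sX i ∈ D.Wg :=
  Subgroup.subset_closure ⟨i, rfl⟩

lemma mul_sX_mul_sX (u : AddAut X) (i : I) : u * D.sX i * D.sX i = u := by
  rw [mul_assoc, sX_mul_self, mul_one]

lemma alpha_ne_zero (i : I) : D.α i ≠ 0 := D.indep_α.ne_zero i

end Basic

section Words

lemma mem_Wg_iff_exists_word (u : AddAut X) :
    u ∈ D.Wg ↔ ∃ l : List I, (l.map D.sX).prod = u := by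
  constructor
  · intro hu
    induction hu using Subgroup.closure_induction with
    | mem x hx =>
      obtain ⟨i, rfl⟩ := hx
      exact ⟨[i], by simp⟩
    | one => exact ⟨[], by simp⟩
    | mul x y _ _ hx hy =>
      obtain ⟨l1, rfl⟩ := hx
      obtain ⟨l2, rfl⟩ := hy
      exact ⟨l1 ++ l2, by rw [List.map_append, List.prod_append]⟩
    | inv x _ hx =>
      obtain ⟨l, rfl⟩ := hx
      refine ⟨l.reverse, ?_⟩
      rw [List.prod_inv_reverse, List.map_reverse, List.map_map]
      simp only [Function.comp_def, sX_inv]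
  · rintro ⟨l, rfl⟩
    refine D.Wg.list_prod_mem ?_
    simp only [List.mem_map]
    rintro _ ⟨i, -, rfl⟩
    exact D.sX_mem i

noncomputable def wlen (u : AddAut X) : ℕ :=
  sInf {n | ∃ l : List I, l.length = n ∧ (l.map D.sX).prod = u}

lemma wlen_le {u : AddAut X} {l : List I} (h : (l.map D.sX).prod = u) :
    D.wlen u ≤ l.length := Nat.sInf_le ⟨l, rfl, h⟩

lemma exists_reduced_word {u : AddAut X} (hu : u ∈ D.Wg) :
    ∃ l : List I, l.length = D.wlen u ∧ (l.map D.sX).prod = u := by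
  obtain ⟨l, hl⟩ := (D.mem_Wg_iff_exists_word u).mp hu
  exact Nat.sInf_mem (s := {n | ∃ l : List I, l.length = n ∧ (l.map D.sX).prod = u})
    ⟨l.length, l, rfl, hl⟩

lemma wlen_mul_le {u v : AddAut X} (hu : u ∈ D.Wg) (hv : v ∈ D.Wg) :
    D.wlen (u * v) ≤ D.wlen u + D.wlen v := by
  obtain ⟨l1, hl1, rfl⟩ := D.exists_reduced_word hu
  obtain ⟨l2, hl2, rfl⟩ := D.exists_reduced_word hv
  simpa [hl1, hl2] using D.wlen_le (l := l1 ++ l2) (by rw [List.map_append, List.prod_append])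

lemma exists_wlen_mul_sX_lt {u : AddAut X} (hu : u ∈ D.Wg) (h0 : 0 < D.wlen u) :
    ∃ j, D.wlen (u * D.sX j) < D.wlen u := by
  obtain ⟨l, hl, rfl⟩ := D.exists_reduced_word hu
  rcases l.eq_nil_or_concat with rfl | ⟨l', j, rfl⟩
  · simp only [List.length_nil] at hl; omega
  refine ⟨j, ?_⟩
  have : (List.map D.sX (l'.concat j)).prod * D.sX j = (l'.map D.sX).prod := by
    simp [mul_assoc, sX_mul_self]
  rw [this, ← hl]
  simpa using D.wlen_le (l := l') rfl

lemma eq_one_of_wlen_eq_zero {u : AddAut X} (hu : u ∈ D.Wg) (h : D.wlen u = 0) : u = 1 := by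
  obtain ⟨l, hl, rfl⟩ := D.exists_reduced_word hu
  rw [h, List.length_eq_zero_iff] at hl
  simp [hl]

end Words

section Positivity

def IsNonnegComb (x : X) : Prop := ∃ c : I → ℕ, x = ∑ i, (c i : ℤ) • D.α i

variable {D}

lemma IsNonnegComb.add {x y : X} (hx : D.IsNonnegComb x) (hy : D.IsNonnegComb y) :
    D.IsNonnegComb (x + y) := by
  obtain ⟨c, rfl⟩ := hx
  obtain ⟨d, rfl⟩ := hy
  exact ⟨c + d, by simp [add_smul, Finset.sum_add_distrib]⟩

lemma IsNonnegComb.zsmul {x : X} (hx : D.IsNonnegComb x) {c : ℤ} (hc : 0 ≤ c) :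
    D.IsNonnegComb (c • x) := by
  obtain ⟨e, rfl⟩ := hx
  refine ⟨fun i => c.toNat * e i, ?_⟩
  simp [Finset.smul_sum, mul_smul, Int.toNat_of_nonneg hc]

lemma IsNonnegComb.eq_zero_of_add_eq_zero {x y : X} (hx : D.IsNonnegComb x)
    (hy : D.IsNonnegComb y) (h : x + y = 0) : x = 0 := by
  obtain ⟨c, rfl⟩ := hx
  obtain ⟨d, rfl⟩ := hy
  have hcd := Fintype.linearIndependent_iff.mp D.indep_α (fun i => (c i : ℤ) + d i)
    (by simpa [add_smul, Finset.sum_add_distrib] using h)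
  refine Finset.sum_eq_zero fun i _ => ?_
  have : c i = 0 := by have := hcd i; omega
  simp [this]

variable (D)

lemma isNonnegComb_alpha (i : I) : D.IsNonnegComb (D.α i) := by
  classical
  exact ⟨Pi.single i 1, by simp [Pi.single_apply]⟩

lemma pr_nonneg_of_mem_Ypp {m : Y} (hm : m ∈ D.Ypp) {x : X} (hx : D.IsNonnegComb x) :
    0 ≤ D.pr m x := by
  obtain ⟨c, rfl⟩ := hx
  simp only [pr, map_sum, map_zsmul, smul_eq_mul]
  exact Finset.sum_nonneg fun i _ => mul_nonneg (Int.natCast_nonneg _) (hm i)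

lemma apply_mem_Phi {u : AddAut X} (hu : u ∈ D.Wg) {x : X} (hx : x ∈ D.Phi) :
    u x ∈ D.Phi := by
  obtain ⟨⟨g, k⟩, hg, rfl⟩ := hx
  exact ⟨⟨u * g, k⟩, Subgroup.mul_mem _ hu hg, rfl⟩

lemma alpha_mem_Phi (i : I) : D.α i ∈ D.Phi := ⟨⟨1, i⟩, Subgroup.one_mem _, rfl⟩

lemma neg_mem_Phi {x : X} (hx : x ∈ D.Phi) : -x ∈ D.Phi := by
  obtain ⟨⟨g, k⟩, hg, rfl⟩ := hx
  refine ⟨⟨g * D.sX k, k⟩, Subgroup.mul_mem _ hg (D.sX_mem k), ?_⟩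
  change -(g (D.α k)) = g (D.sX k (D.α k))
  rw [sX_alpha_self, map_neg]

lemma zero_notMem_Phi : (0 : X) ∉ D.Phi := by
  rintro ⟨⟨u, k⟩, -, h⟩
  exact D.alpha_ne_zero k (u.injective (h.symm.trans (map_zero u).symm))

lemma neg_mem_PhiNeg_iff {x : X} : -x ∈ D.PhiNeg ↔ x ∈ D.PhiPos := by
  change -(-x) ∈ D.PhiPos ↔ _
  rw [neg_neg]

lemma neg_mem_PhiNeg {x : X} (hx : x ∈ D.PhiPos) : -x ∈ D.PhiNeg := D.neg_mem_PhiNeg_iff.mpr hx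

lemma notMem_PhiNeg_of_mem_PhiPos {x : X} (hp : x ∈ D.PhiPos) : x ∉ D.PhiNeg := fun hn =>
  D.zero_notMem_Phi (IsNonnegComb.eq_zero_of_add_eq_zero hp.2 hn.2 (add_neg_cancel x) ▸ hp.1)

lemma add_add_smul_ne_zero {p q s : X} (hp : p ∈ D.PhiPos) (hq : q ∈ D.PhiPos)
    (hs : s ∈ D.PhiPos) {c : ℤ} (hc : 0 ≤ c) : p + q + c • s ≠ 0 := fun h =>
  D.zero_notMem_Phi
    (IsNonnegComb.eq_zero_of_add_eq_zero hp.2 (IsNonnegComb.add hq.2 (IsNonnegComb.zsmul hs.2 hc))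
      (by rw [← h, add_assoc]) ▸ hp.1)

end Positivity

section Dihedral

/-- The alternating product `s_i s_j s_i ⋯` with `n` factors. -/
def altWord (i j : I) (n : ℕ) : AddAut X :=
  (((List.range n).map (altLetter i j)).map D.sX).prod

lemma altWord_zero (i j : I) : D.altWord i j 0 = 1 := by simp [altWord]

lemma altWord_succ (i j : I) (n : ℕ) :
    D.altWord i j (n + 1) = D.altWord i j n * D.sX (altLetter i j n) := by
  simp [altWord, List.range_succ]

lemma altWord_one (i j : I) : D.altWord i j 1 = D.sX i := by
  simp [altWord_succ, altWord_zero, altLetter]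

lemma altWord_succ' (i j : I) (n : ℕ) : D.altWord i j (n + 1) = D.sX i * D.altWord j i n := by
  induction n with
  | zero => rw [altWord_one, altWord_zero, mul_one]
  | succ n ih => rw [altWord_succ, ih, altLetter_succ, mul_assoc, ← altWord_succ]

lemma altWord_succ_mul_sX (i j : I) (n : ℕ) :
    D.altWord i j (n + 1) * D.sX (altLetter i j n) = D.altWord i j n := by
  rw [altWord_succ, mul_sX_mul_sX]

lemma altWord_mem (i j : I) (n : ℕ) : D.altWord i j n ∈ D.Wg := by
  induction n with
  | zero => rw [altWord_zero]; exact Subgroup.one_mem _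
  | succ n ih => rw [altWord_succ]; exact Subgroup.mul_mem _ ih (D.sX_mem _)

lemma wlen_altWord_le (i j : I) (n : ℕ) : D.wlen (D.altWord i j n) ≤ n := by
  simpa using D.wlen_le (u := D.altWord i j n) rfl

/-- The subgroup generated by `s_i` and `s_j`, as the set of alternating products. -/
def dihedral (i j : I) : Set (AddAut X) := {g | ∃ n, g = D.altWord i j n ∨ g = D.altWord j i n}

noncomputable def dihedralLen (i j : I) (g : AddAut X) : ℕ :=
  sInf {n | g = D.altWord i j n ∨ g = D.altWord j i n}

variable {D}

lemma dihedralLen_le {i j : I} {g : AddAut X} {n : ℕ}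
    (h : g = D.altWord i j n ∨ g = D.altWord j i n) : D.dihedralLen i j g ≤ n :=
  Nat.sInf_le h

lemma dihedralLen_spec {i j : I} {g : AddAut X} (hg : g ∈ D.dihedral i j) :
    g = D.altWord i j (D.dihedralLen i j g) ∨ g = D.altWord j i (D.dihedralLen i j g) :=
  Nat.sInf_mem hg

lemma dihedralLen_comm (i j : I) (g : AddAut X) : D.dihedralLen i j g = D.dihedralLen j i g := by
  unfold dihedralLen
  simp only [or_comm]

lemma mem_Wg_of_mem_dihedral {i j : I} {g : AddAut X} (hg : g ∈ D.dihedral i j) : g ∈ D.Wg := by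
  obtain ⟨n, rfl | rfl⟩ := hg <;> exact D.altWord_mem _ _ _

lemma wlen_mul_le_add_dihedralLen {u : AddAut X} (hu : u ∈ D.Wg) {i j : I} {h : AddAut X}
    (hh : h ∈ D.dihedral i j) : D.wlen (u * h) ≤ D.wlen u + D.dihedralLen i j h := by
  have h1 := D.wlen_mul_le hu (mem_Wg_of_mem_dihedral hh)
  have h2 : D.wlen h ≤ D.dihedralLen i j h := by
    rcases dihedralLen_spec hh with h' | h' <;>
    · nth_rewrite 1 [h']
      exact D.wlen_altWord_le _ _ _
  omega

lemma altWord_mul_sX {i j k : I} (hk : k = i ∨ k = j) (n : ℕ) :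
    ∃ m, D.altWord i j n * D.sX k = D.altWord i j m ∨
      D.altWord i j n * D.sX k = D.altWord j i m := by
  by_cases hk' : k = altLetter i j n
  · exact ⟨n + 1, Or.inl (by rw [hk', ← altWord_succ])⟩
  have hkt : k = altLetter j i n := by
    rcases altLetter_eq_or i j n with ⟨h1, h2⟩ | ⟨h1, h2⟩ <;> rcases hk with rfl | rfl <;>
      simp_all
  cases n with
  | zero =>
    refine ⟨1, Or.inr ?_⟩
    rw [altWord_zero, one_mul, altWord_one, hkt]
    rfl
  | succ n => exact ⟨n, Or.inl (by rw [hkt, altLetter_succ, altWord_succ_mul_sX])⟩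

lemma sX_mul_altWord {i j k : I} (hk : k = i ∨ k = j) (n : ℕ) :
    ∃ m ≤ n + 1, D.sX k * D.altWord i j n = D.altWord i j m ∨
      D.sX k * D.altWord i j n = D.altWord j i m := by
  rcases hk with rfl | rfl
  · cases n with
    | zero => exact ⟨1, le_rfl, Or.inl (by rw [altWord_zero, mul_one, altWord_one])⟩
    | succ n =>
      refine ⟨n, by omega, Or.inr ?_⟩
      rw [altWord_succ', ← mul_assoc, sX_mul_self, one_mul]
  · exact ⟨n + 1, le_rfl, Or.inr (altWord_succ' ..).symm⟩

lemma mul_sX_mem_dihedral {i j k : I} (hk : k = i ∨ k = j) {g : AddAut X}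
    (hg : g ∈ D.dihedral i j) : g * D.sX k ∈ D.dihedral i j := by
  obtain ⟨n, rfl | rfl⟩ := hg
  · exact D.altWord_mul_sX hk n
  · obtain ⟨m, h⟩ := D.altWord_mul_sX hk.symm n
    exact ⟨m, h.symm⟩

lemma sX_mul_mem_dihedral {i j k : I} (hk : k = i ∨ k = j) {g : AddAut X}
    (hg : g ∈ D.dihedral i j) : D.sX k * g ∈ D.dihedral i j := by
  obtain ⟨n, rfl | rfl⟩ := hg
  · obtain ⟨m, -, h⟩ := D.sX_mul_altWord hk n
    exact ⟨m, h⟩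
  · obtain ⟨m, -, h⟩ := D.sX_mul_altWord hk.symm n
    exact ⟨m, h.symm⟩

lemma dihedralLen_sX_mul_le {i j k : I} (hk : k = i ∨ k = j) {g : AddAut X}
    (hg : g ∈ D.dihedral i j) :
    D.dihedralLen i j (D.sX k * g) ≤ D.dihedralLen i j g + 1 := by
  rcases dihedralLen_spec hg with h | h
  · obtain ⟨m, hm, h2⟩ := D.sX_mul_altWord hk (D.dihedralLen i j g)
    rw [← h] at h2
    exact (dihedralLen_le h2).trans hm
  · obtain ⟨m, hm, h2⟩ := D.sX_mul_altWord hk.symm (D.dihedralLen i j g)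
    rw [← h] at h2
    exact (dihedralLen_le h2.symm).trans hm

end Dihedral

section Braid

/-- The order of `s_i s_j` when `a b = A i j * A j i < 4`. -/
def braidOrder (ab : ℤ) : ℕ := if ab = 0 then 2 else if ab = 1 then 3 else if ab = 2 then 4 else 6

lemma cartan_entries_of_mul_lt_four {i j : I} (hij : i ≠ j) (h : D.A i j * D.A j i < 4) :
    (D.A i j = 0 ∧ D.A j i = 0) ∨ (D.A i j = -1 ∧ D.A j i = -1) ∨
    (D.A i j = -1 ∧ D.A j i = -2) ∨ (D.A i j = -2 ∧ D.A j i = -1) ∨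
    (D.A i j = -1 ∧ D.A j i = -3) ∨ (D.A i j = -3 ∧ D.A j i = -1) := by
  have ha := D.A_offdiag i j hij
  have hb := D.A_offdiag j i hij.symm
  by_cases h0 : D.A i j = 0
  · simp [h0, D.A_zero_iff i j h0]
  have h0' : D.A j i ≠ 0 := fun h' => h0 (D.A_zero_iff j i h')
  have : D.A i j ≤ -1 := by omega
  have : D.A j i ≤ -1 := by omega
  have : -3 ≤ D.A i j := by nlinarith
  have : -3 ≤ D.A j i := by nlinarith
  rcases (by omega : D.A i j = -1 ∨ D.A i j = -2 ∨ D.A i j = -3) with h1 | h1 | h1 <;>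
  rcases (by omega : D.A j i = -1 ∨ D.A j i = -2 ∨ D.A j i = -3) with h2 | h2 | h2 <;>
  norm_num [h1, h2] at h <;> norm_num [h1, h2]

lemma altWord_braid {i j : I} (hij : i ≠ j) (h : D.A i j * D.A j i < 4) :
    D.altWord i j (braidOrder (D.A i j * D.A j i)) =
      D.altWord j i (braidOrder (D.A i j * D.A j i)) := by
  rcases D.cartan_entries_of_mul_lt_four hij h with
    ⟨h1, h2⟩ | ⟨h1, h2⟩ | ⟨h1, h2⟩ | ⟨h1, h2⟩ | ⟨h1, h2⟩ | ⟨h1, h2⟩ <;>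
  · ext x
    rw [h1, h2]
    norm_num [braidOrder]
    simp only [altWord_succ, altWord_zero, altLetter]
    norm_num
    simp only [aut_mul_apply, sX_apply, pr_sub, pr_zsmul, pr_alpha, D.A_diag, h1, h2]
    module

variable {D}

lemma altWord_add_eq_sub {i j : I} {m : ℕ} (hbr : D.altWord i j m = D.altWord j i m) {t : ℕ}
    (ht : t ≤ m) :
    D.altWord i j (m + t) = D.altWord j i (m - t) ∧
      D.altWord j i (m + t) = D.altWord i j (m - t) := by
  induction t with
  | zero => exact ⟨hbr, hbr.symm⟩
  | succ t ih =>
    obtain ⟨ih1, ih2⟩ := ih (by omega)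
    have hmt : m - t = (m - (t + 1)) + 1 := by omega
    rw [← add_assoc, altWord_succ', altWord_succ', ih1, ih2, hmt, altWord_succ', altWord_succ',
      ← mul_assoc, ← mul_assoc, sX_mul_self, sX_mul_self, one_mul, one_mul]
    exact ⟨rfl, rfl⟩

lemma altWord_two_mul_add {i j : I} {m : ℕ} (hbr : D.altWord i j m = D.altWord j i m) (r : ℕ) :
    D.altWord i j (2 * m + r) = D.altWord i j r := by
  induction r with
  | zero => simpa [two_mul, altWord_zero] using (altWord_add_eq_sub hbr le_rfl).1
  | succ r ih =>
    rw [← add_assoc, altWord_succ, ih, altWord_succ]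
    congr 2
    simp [altLetter, Nat.add_mod]

lemma dihedralLen_altWord_lt {i j : I} {m : ℕ} (hm : 0 < m)
    (hbr : D.altWord i j m = D.altWord j i m) {n : ℕ} (hn : m < n) :
    D.dihedralLen i j (D.altWord i j n) < n := by
  rcases le_or_gt n (2 * m) with h | h
  · have := (altWord_add_eq_sub hbr (t := n - m) (by omega)).1
    rw [Nat.add_sub_cancel' hn.le] at this
    have := dihedralLen_le (Or.inr this)
    omega
  · have := altWord_two_mul_add hbr (n - 2 * m)
    rw [Nat.add_sub_cancel' h.le] at this
    have := dihedralLen_le (Or.inl this)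
    omega

lemma dihedralLen_mul_sX_le {i j k : I} {g : AddAut X} {n : ℕ}
    (h : (g = D.altWord i j (n + 1) ∧ altLetter i j n = k) ∨
      (g = D.altWord j i (n + 1) ∧ altLetter j i n = k)) :
    D.dihedralLen i j (g * D.sX k) ≤ n := by
  rcases h with ⟨rfl, rfl⟩ | ⟨rfl, rfl⟩ <;> rw [altWord_succ_mul_sX]
  exacts [dihedralLen_le (Or.inl rfl), dihedralLen_le (Or.inr rfl)]

/-- A minimal alternating expression of `g` that `s_i` does not shorten ends with `s_j`. -/
lemma eq_altWord_of_dihedralLen_le {i j : I} {g : AddAut X} (hg : g ∈ D.dihedral i j)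
    (hlen : D.dihedralLen i j g ≤ D.dihedralLen i j (g * D.sX i)) :
    (g = D.altWord i j (D.dihedralLen i j g) ∧ D.dihedralLen i j g % 2 = 0) ∨
      (g = D.altWord j i (D.dihedralLen i j g) ∧ D.dihedralLen i j g % 2 = 1) := by
  obtain ⟨n, hn⟩ : ∃ n, D.dihedralLen i j g = n := ⟨_, rfl⟩
  rw [hn] at hlen ⊢
  have rep := dihedralLen_spec hg
  rw [hn] at rep
  rcases n with _ | n
  · refine Or.inl ⟨?_, rfl⟩
    rcases rep with h | h <;> simpa [altWord_zero] using h
  by_contra hcon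
  have : D.dihedralLen i j (g * D.sX i) ≤ n := by
    refine dihedralLen_mul_sX_le (rep.imp (fun h => ⟨h, ?_⟩) (fun h => ⟨h, ?_⟩)) <;>
      simp only [altLetter] <;> split_ifs <;> simp_all <;> omega
  omega

lemma dihedralLen_lt_of_braid {i j : I} {g : AddAut X} (hg : g ∈ D.dihedral i j)
    (hlen : D.dihedralLen i j g ≤ D.dihedralLen i j (g * D.sX i)) {m : ℕ} (hm : 0 < m)
    (hbr : D.altWord i j m = D.altWord j i m) : D.dihedralLen i j g < m := by
  rcases lt_trichotomy (D.dihedralLen i j g) m with h | h | h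
  · exact h
  · exfalso
    obtain ⟨m, rfl⟩ : ∃ m', m = m' + 1 := ⟨m - 1, by omega⟩
    have hgi : g = D.altWord i j (m + 1) ∧ g = D.altWord j i (m + 1) := by
      rcases dihedralLen_spec hg with h' | h' <;> rw [h] at h'
      exacts [⟨h', h'.trans hbr⟩, ⟨h'.trans hbr.symm, h'⟩]
    have := dihedralLen_mul_sX_le (k := i) (n := m) (by
      rcases altLetter_eq_or i j m with ⟨h1, -⟩ | ⟨-, h2⟩
      exacts [Or.inl ⟨hgi.1, h1⟩, Or.inr ⟨hgi.2, h2⟩])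
    omega
  · exfalso
    rcases dihedralLen_spec hg with h' | h'
    · have := dihedralLen_altWord_lt hm hbr h
      rw [← h'] at this
      omega
    · have := dihedralLen_altWord_lt hm hbr.symm h
      rw [← h', ← dihedralLen_comm] at this
      omega

end Braid

section RankTwo

/-- `(altCoeff a b n).1` and `(altCoeff a b n).2` are the coordinates in the basis `(α i, α j)`
of `altWord i j n (α i)` and of `altWord j i n (α i)`, where `a = -A i j` and `b = -A j i`. -/
def altCoeff (a b : ℤ) : ℕ → (ℤ × ℤ) × (ℤ × ℤ)
  | 0 => ((1, 0), (1, 0))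
  | n + 1 =>
    let c := altCoeff a b n
    ((a * c.2.2 - c.2.1, c.2.2), (c.1.1, b * c.1.1 - c.1.2))

lemma altWord_apply_alpha (i j : I) (n : ℕ) :
    let c := altCoeff (-D.A i j) (-D.A j i) n
    D.altWord i j n (D.α i) = c.1.1 • D.α i + c.1.2 • D.α j ∧
      D.altWord j i n (D.α i) = c.2.1 • D.α i + c.2.2 • D.α j := by
  induction n with
  | zero => simp [altWord_zero, altCoeff, aut_one_apply]
  | succ n ih =>
    obtain ⟨ih1, ih2⟩ := ih
    constructor
    · rw [altWord_succ', aut_mul_apply, ih2, sX_apply]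
      simp only [pr_add, pr_zsmul, pr_alpha, D.A_diag, altCoeff]
      module
    · rw [altWord_succ', aut_mul_apply, ih1, sX_apply]
      simp only [pr_add, pr_zsmul, pr_alpha, D.A_diag, altCoeff]
      module

/-- Nonnegativity of the coordinates of `w (α i)` for `w` the alternating word of length `n`
ending with `s_j`. -/
def AltCoeffNonneg (a b : ℤ) (n : ℕ) : Prop :=
  (n % 2 = 0 → 0 ≤ (altCoeff a b n).1.1 ∧ 0 ≤ (altCoeff a b n).1.2) ∧
    (n % 2 = 1 → 0 ≤ (altCoeff a b n).2.1 ∧ 0 ≤ (altCoeff a b n).2.2)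

/-- In the infinite dihedral case the cone `{0 ≤ c₂, b c₁ ≤ 2 c₂}` resp. `{0 ≤ c₁, a c₂ ≤ 2 c₁}`
is preserved by the recursion. -/
lemma altCoeffNonneg_of_four_le {a b : ℤ} (ha : 0 ≤ a) (hb : 0 ≤ b) (hab : 4 ≤ a * b)
    (n : ℕ) : AltCoeffNonneg a b n := by
  suffices h : (n % 2 = 0 → 0 ≤ (altCoeff a b n).1.1 ∧ 0 ≤ (altCoeff a b n).1.2 ∧
        a * (altCoeff a b n).1.2 ≤ 2 * (altCoeff a b n).1.1) ∧
      (n % 2 = 1 → 0 ≤ (altCoeff a b n).2.1 ∧ 0 ≤ (altCoeff a b n).2.2 ∧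
        b * (altCoeff a b n).2.1 ≤ 2 * (altCoeff a b n).2.2) from
    ⟨fun hn => (h.1 hn).imp_right And.left, fun hn => (h.2 hn).imp_right And.left⟩
  induction n with
  | zero => simp [altCoeff]
  | succ n ih =>
    rcases Nat.mod_two_eq_zero_or_one n with hn | hn
    · refine ⟨by omega, fun _ => ?_⟩
      obtain ⟨h1, h2, h3⟩ := ih.1 hn
      simp only [altCoeff]
      refine ⟨h1, by nlinarith, by nlinarith⟩
    · refine ⟨fun _ => ?_, by omega⟩
      obtain ⟨h1, h2, h3⟩ := ih.2 hn
      simp only [altCoeff]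
      refine ⟨by nlinarith, h2, by nlinarith⟩

lemma altCoeffNonneg_of_lt_braidOrder {i j : I} (hij : i ≠ j) (h : D.A i j * D.A j i < 4)
    {n : ℕ} (hn : n < braidOrder (D.A i j * D.A j i)) :
    AltCoeffNonneg (-D.A i j) (-D.A j i) n := by
  rcases D.cartan_entries_of_mul_lt_four hij h with
    ⟨h1, h2⟩ | ⟨h1, h2⟩ | ⟨h1, h2⟩ | ⟨h1, h2⟩ | ⟨h1, h2⟩ | ⟨h1, h2⟩ <;>
  · rw [h1, h2] at hn ⊢
    norm_num [braidOrder] at hn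
    interval_cases n <;> unfold AltCoeffNonneg <;> decide

lemma exists_nonneg_coeffs_of_dihedralLen_le {i j : I} (hij : i ≠ j) {g : AddAut X}
    (hg : g ∈ D.dihedral i j)
    (hlen : D.dihedralLen i j g ≤ D.dihedralLen i j (g * D.sX i)) :
    ∃ c d : ℤ, 0 ≤ c ∧ 0 ≤ d ∧ g (D.α i) = c • D.α i + d • D.α j := by
  have hnn : AltCoeffNonneg (-D.A i j) (-D.A j i) (D.dihedralLen i j g) := by
    by_cases hab : D.A i j * D.A j i < 4
    · refine D.altCoeffNonneg_of_lt_braidOrder hij hab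
        (dihedralLen_lt_of_braid hg hlen ?_ (D.altWord_braid hij hab))
      unfold braidOrder
      split_ifs <;> norm_num
    · have := D.A_offdiag i j hij
      have := D.A_offdiag j i hij.symm
      exact altCoeffNonneg_of_four_le (a := -D.A i j) (b := -D.A j i) (by omega) (by omega)
        (by linarith) _
  have happ := D.altWord_apply_alpha i j (D.dihedralLen i j g)
  rcases eq_altWord_of_dihedralLen_le hg hlen with ⟨hg', hn⟩ | ⟨hg', hn⟩
  · exact ⟨_, _, (hnn.1 hn).1, (hnn.1 hn).2, (congrArg (· (D.α i)) hg').trans happ.1⟩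
  · exact ⟨_, _, (hnn.2 hn).1, (hnn.2 hn).2, (congrArg (· (D.α i)) hg').trans happ.2⟩

end RankTwo

section Dichotomy

/-- Take `x` of minimal length among the valid prefixes; `u s_j` is one. -/
lemma exists_dihedral_reduction {u : AddAut X} (hu : u ∈ D.Wg) (i : I) {j : I}
    (hj : D.wlen (u * D.sX j) < D.wlen u) :
    ∃ x ∈ D.Wg, x⁻¹ * u ∈ D.dihedral i j ∧
      D.wlen x + D.dihedralLen i j (x⁻¹ * u) ≤ D.wlen u ∧ D.wlen x < D.wlen u ∧
      ∀ k, (k = i ∨ k = j) → D.wlen x ≤ D.wlen (x * D.sX k) := by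
  set S : Set ℕ := {n | ∃ x ∈ D.Wg, x⁻¹ * u ∈ D.dihedral i j ∧
    D.wlen x + D.dihedralLen i j (x⁻¹ * u) ≤ D.wlen u ∧ D.wlen x = n}
  have hSj : D.wlen (u * D.sX j) ∈ S := by
    have hinv : (u * D.sX j)⁻¹ * u = D.altWord j i 1 := by
      rw [altWord_one, mul_inv_rev, sX_inv, mul_assoc, inv_mul_cancel, mul_one]
    refine ⟨u * D.sX j, Subgroup.mul_mem _ hu (D.sX_mem j), ⟨1, Or.inr hinv⟩, ?_, rfl⟩
    have := dihedralLen_le (Or.inr hinv)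
    omega
  obtain ⟨x, hx, hh, hlen, hxS⟩ := Nat.sInf_mem ⟨_, hSj⟩
  have hmin : D.wlen x ≤ D.wlen (u * D.sX j) := hxS ▸ Nat.sInf_le hSj
  refine ⟨x, hx, hh, hlen, by omega, fun k hk => ?_⟩
  by_contra! hk'
  have hxk : (x * D.sX k)⁻¹ * u = D.sX k * (x⁻¹ * u) := by
    rw [mul_inv_rev, sX_inv, mul_assoc]
  have hmem : D.wlen (x * D.sX k) ∈ S := by
    refine ⟨x * D.sX k, Subgroup.mul_mem _ hx (D.sX_mem k), hxk ▸ sX_mul_mem_dihedral hk hh,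
      ?_, rfl⟩
    rw [hxk]
    have := dihedralLen_sX_mul_le hk hh
    omega
  have := Nat.sInf_le hmem
  omega

/-- Tits' lemma. The induction on word length peels off a maximal dihedral suffix and uses the
rank-two case. -/
lemma isNonnegComb_apply_alpha {u : AddAut X} (hu : u ∈ D.Wg) {i : I}
    (hi : D.wlen u ≤ D.wlen (u * D.sX i)) : D.IsNonnegComb (u (D.α i)) := by
  induction hn : D.wlen u using Nat.strong_induction_on generalizing u i with
  | _ n ih =>
  rcases Nat.eq_zero_or_pos n with rfl | hpos
  · rw [eq_one_of_wlen_eq_zero D hu hn]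
    exact D.isNonnegComb_alpha i
  obtain ⟨j, hj⟩ := D.exists_wlen_mul_sX_lt hu (hn ▸ hpos)
  have hij : i ≠ j := by rintro rfl; omega
  obtain ⟨x, hx, hh, hlen, hxu, hxk⟩ := D.exists_dihedral_reduction hu i hj
  have hl2 : D.dihedralLen i j (x⁻¹ * u) ≤ D.dihedralLen i j (x⁻¹ * u * D.sX i) := by
    have := D.wlen_mul_le_add_dihedralLen hx (mul_sX_mem_dihedral (Or.inl rfl) hh)
    rw [← mul_assoc, mul_inv_cancel_left] at this
    omega
  obtain ⟨c, d, hc, hd, hcd⟩ := D.exists_nonneg_coeffs_of_dihedralLen_le hij hh hl2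
  have hux : u (D.α i) = c • x (D.α i) + d • x (D.α j) := by
    rw [← mul_inv_cancel_left x u, aut_mul_apply, hcd, map_add, map_zsmul, map_zsmul]
  rw [hux]
  exact ((ih _ (hn ▸ hxu) hx (hxk i (Or.inl rfl)) rfl).zsmul hc).add
    ((ih _ (hn ▸ hxu) hx (hxk j (Or.inr rfl)) rfl).zsmul hd)

lemma mem_PhiPos_or_mem_PhiNeg {x : X} (hx : x ∈ D.Phi) : x ∈ D.PhiPos ∨ x ∈ D.PhiNeg := by
  obtain ⟨⟨u, i⟩, hu, rfl⟩ := hx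
  have hPhi : ∀ v ∈ D.Wg, v (D.α i) ∈ D.Phi := fun v hv => D.apply_mem_Phi hv (D.alpha_mem_Phi i)
  have hui : u * D.sX i ∈ D.Wg := Subgroup.mul_mem _ hu (D.sX_mem i)
  rcases le_or_gt (D.wlen u) (D.wlen (u * D.sX i)) with hle | hlt
  · exact Or.inl ⟨hPhi u hu, D.isNonnegComb_apply_alpha hu hle⟩
  · refine Or.inr ⟨D.neg_mem_Phi (hPhi u hu), ?_⟩
    have := D.isNonnegComb_apply_alpha hui (by rw [mul_sX_mul_sX]; omega)
    rwa [aut_mul_apply, sX_alpha_self, map_neg] at this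

end Dichotomy

section Inversions

lemma mem_PhiNeg_iff_notMem_PhiPos {x : X} (hx : x ∈ D.Phi) : x ∈ D.PhiNeg ↔ x ∉ D.PhiPos :=
  ⟨fun hn hp => D.notMem_PhiNeg_of_mem_PhiPos hp hn, (D.mem_PhiPos_or_mem_PhiNeg hx).resolve_left⟩

lemma exists_int_coeffs {x : X} (hx : x ∈ D.Phi) : ∃ d : I → ℤ, x = ∑ t, d t • D.α t := by
  rcases D.mem_PhiPos_or_mem_PhiNeg hx with ⟨-, c, hc⟩ | ⟨-, c, hc⟩
  · exact ⟨fun t => c t, hc⟩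
  · refine ⟨fun t => -c t, ?_⟩
    rw [← neg_neg x, hc]
    simp [neg_smul, Finset.sum_neg_distrib]

lemma eq_one_or_eq_neg_one_of_smul_mem_Phi {x : X} (hx : x ∈ D.Phi) {c : ℤ}
    (hcx : c • x ∈ D.Phi) : c = 1 ∨ c = -1 := by
  classical
  obtain ⟨⟨u, l⟩, hu, hul⟩ := hcx
  obtain ⟨d, hd⟩ := D.exists_int_coeffs (D.apply_mem_Phi (inv_mem hu) hx)
  have hl : D.α l = ∑ t, (c * d t) • D.α t := by
    rw [← aut_inv_apply_self u (D.α l), ← hul, map_zsmul, hd, Finset.smul_sum]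
    simp only [smul_smul]
  have := Fintype.linearIndependent_iff.mp D.indep_α (fun t => c * d t - (Pi.single l 1 : I → ℤ) t)
    (by simp [sub_smul, Finset.sum_sub_distrib, ← hl, Pi.single_apply]) l
  exact Int.eq_one_or_neg_one_of_mul_eq_one (by simpa [sub_eq_zero] using this)

lemma eq_smul_alpha_of_add_eq_smul_alpha {x y : X} (hx : D.IsNonnegComb x)
    (hy : D.IsNonnegComb y) {k : I} {t : ℤ} (h : x + y = t • D.α k) :
    ∃ n : ℕ, x = (n : ℤ) • D.α k := by
  classical
  obtain ⟨c, rfl⟩ := hx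
  obtain ⟨m, rfl⟩ := hy
  have hcm := Fintype.linearIndependent_iff.mp D.indep_α
    (fun l => (c l : ℤ) + m l - (Pi.single k t : I → ℤ) l)
    (by simp [add_smul, sub_smul, Finset.sum_add_distrib, Finset.sum_sub_distrib, ← h,
      Pi.single_apply])
  refine ⟨c k, Finset.sum_eq_single k (fun l _ hl => ?_) (by simp)⟩
  have := hcm l
  simp only [Pi.single_apply, hl, if_false] at this
  simp [show c l = 0 by omega]

lemma invSet_sX_subset (k : I) : D.invSet (D.sX k) ⊆ {D.α k} := by
  rintro b ⟨hbp, hbn⟩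
  obtain ⟨n, hn⟩ := D.eq_smul_alpha_of_add_eq_smul_alpha hbp.2 hbn.2
    (t := D.pr (D.αv k) b) (by rw [sX_apply]; abel)
  rcases D.eq_one_or_eq_neg_one_of_smul_mem_Phi (D.alpha_mem_Phi k) (hn ▸ hbp.1) with h | h
  · rw [hn, h, one_smul]; rfl
  · omega

lemma invSet_inv (u : AddAut X) : D.invSet u⁻¹ = (fun b => -(u b)) '' D.invSet u := by
  ext d
  constructor
  · rintro ⟨hdp, hdn⟩
    refine ⟨-(u⁻¹ d), ⟨hdn, ?_⟩, by simp [aut_apply_inv_self]⟩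
    rw [map_neg, aut_apply_inv_self]
    exact D.neg_mem_PhiNeg hdp
  · rintro ⟨b, ⟨hbp, hbn⟩, rfl⟩
    refine ⟨hbn, ?_⟩
    rw [map_neg, aut_inv_apply_self]
    exact D.neg_mem_PhiNeg hbp

lemma len_inv (u : AddAut X) : D.len u⁻¹ = D.len u := by
  rw [len, len, invSet_inv]
  exact Set.ncard_image_of_injective _ fun a b h => u.injective (neg_injective h)

lemma invSet_finite {u : AddAut X} (hu : u ∈ D.Wg) : (D.invSet u).Finite := by
  induction hu using Subgroup.closure_induction with
  | mem x hx =>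
    obtain ⟨k, rfl⟩ := hx
    exact (Set.finite_singleton _).subset (D.invSet_sX_subset k)
  | one =>
    refine Set.finite_empty.subset fun b hb => ?_
    exact D.notMem_PhiNeg_of_mem_PhiPos hb.1 hb.2
  | mul x y hx hy ihx ihy =>
    refine (ihy.union (ihx.image fun b => y⁻¹ b)).subset ?_
    rintro b ⟨hbp, hbn⟩
    rcases D.mem_PhiPos_or_mem_PhiNeg (D.apply_mem_Phi hy hbp.1) with hp | hn
    · exact Or.inr ⟨y b, ⟨hp, hbn⟩, aut_inv_apply_self y b⟩
    · exact Or.inl ⟨hbp, hn⟩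
  | inv x hx ihx =>
    rw [invSet_inv]
    exact ihx.image _

lemma invSet_mul {x u : AddAut X} (hx : x ∈ D.Wg) (hu : u ∈ D.Wg) :
    D.invSet (x * u) = (fun d => u⁻¹ d) '' (D.invSet x \ D.invSet u⁻¹) ∪
      (fun d => -(u⁻¹ d)) '' (D.invSet u⁻¹ \ D.invSet x) := by
  ext b
  constructor
  · rintro ⟨hbp, hbn⟩
    rw [aut_mul_apply] at hbn
    rcases D.mem_PhiPos_or_mem_PhiNeg (D.apply_mem_Phi hu hbp.1) with hp | hn
    · refine Or.inl ⟨u b, ⟨⟨hp, hbn⟩, fun h => ?_⟩, aut_inv_apply_self u b⟩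
      have := h.2
      rw [aut_inv_apply_self] at this
      exact D.notMem_PhiNeg_of_mem_PhiPos hbp this
    · refine Or.inr ⟨-(u b), ⟨⟨hn, ?_⟩, fun h => ?_⟩, by simp [aut_inv_apply_self]⟩
      · rw [map_neg, aut_inv_apply_self]
        exact D.neg_mem_PhiNeg hbp
      · have := h.2
        rw [map_neg, neg_mem_PhiNeg_iff] at this
        exact D.notMem_PhiNeg_of_mem_PhiPos this hbn
  · rintro (⟨d, ⟨⟨hdp, hdn⟩, hdu⟩, rfl⟩ | ⟨d, ⟨⟨hdp, hdn⟩, hdx⟩, rfl⟩)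
    · have hd : u⁻¹ d ∈ D.PhiPos := by
        by_contra h
        exact hdu ⟨hdp, (D.mem_PhiNeg_iff_notMem_PhiPos
          (D.apply_mem_Phi (inv_mem hu) hdp.1)).mpr h⟩
      refine ⟨hd, ?_⟩
      rwa [aut_mul_apply, aut_apply_inv_self]
    · have hxd : x d ∈ D.PhiPos := by
        by_contra h
        exact hdx ⟨hdp, (D.mem_PhiNeg_iff_notMem_PhiPos (D.apply_mem_Phi hx hdp.1)).mpr h⟩
      refine ⟨hdn, ?_⟩
      rw [aut_mul_apply, map_neg, aut_apply_inv_self, map_neg]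
      exact D.neg_mem_PhiNeg hxd

lemma len_mul {x u : AddAut X} (hx : x ∈ D.Wg) (hu : u ∈ D.Wg) :
    D.len (x * u) = (D.invSet x \ D.invSet u⁻¹).ncard + (D.invSet u⁻¹ \ D.invSet x).ncard := by
  have hdisj : Disjoint ((fun d => u⁻¹ d) '' (D.invSet x \ D.invSet u⁻¹))
      ((fun d => -(u⁻¹ d)) '' (D.invSet u⁻¹ \ D.invSet x)) := by
    rw [Set.disjoint_left]
    rintro _ ⟨d, ⟨hd, -⟩, rfl⟩ ⟨e, ⟨he, -⟩, heq⟩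
    dsimp only at heq
    rw [← map_neg, (u⁻¹).injective.eq_iff] at heq
    exact D.notMem_PhiNeg_of_mem_PhiPos hd.1 (heq ▸ D.neg_mem_PhiNeg he.1)
  rw [len, D.invSet_mul hx hu, Set.ncard_union_eq hdisj
      (((D.invSet_finite hx).sdiff).image _) (((D.invSet_finite (inv_mem hu)).sdiff).image _),
    Set.ncard_image_of_injective _ (u⁻¹).injective,
    Set.ncard_image_of_injective _ fun a b h => (u⁻¹).injective (neg_injective h)]

end Inversions

section Reflections

variable {D} {g : X}

lemma srefl_eq_conj (hg : g ∈ D.Phi) :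
    ∃ u ∈ D.Wg, ∃ k, g = u (D.α k) ∧ D.srefl g = u * D.sX k * u⁻¹ := by
  have h : ∃ p : AddAut X × I, p.1 ∈ D.Wg ∧ g = p.1 (D.α p.2) := hg
  unfold srefl
  rw [dif_pos h]
  exact ⟨_, h.choose_spec.1, _, h.choose_spec.2, rfl⟩

lemma srefl_mem_Wg (hg : g ∈ D.Phi) : D.srefl g ∈ D.Wg := by
  obtain ⟨u, hu, k, -, h⟩ := srefl_eq_conj hg
  rw [h]
  exact mul_mem (mul_mem hu (D.sX_mem k)) (inv_mem hu)

lemma srefl_mul_self (hg : g ∈ D.Phi) : D.srefl g * D.srefl g = 1 := by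
  obtain ⟨u, -, k, -, h⟩ := srefl_eq_conj hg
  rw [h, show u * D.sX k * u⁻¹ * (u * D.sX k * u⁻¹) = u * (D.sX k * D.sX k) * u⁻¹ by group,
    sX_mul_self, mul_one, mul_inv_cancel]

lemma srefl_inv (hg : g ∈ D.Phi) : (D.srefl g)⁻¹ = D.srefl g :=
  inv_eq_of_mul_eq_one_left (srefl_mul_self hg)

lemma srefl_srefl_apply (hg : g ∈ D.Phi) (x : X) : D.srefl g (D.srefl g x) = x := by
  rw [← aut_mul_apply, srefl_mul_self hg, aut_one_apply]

lemma exists_srefl_apply (hg : g ∈ D.Phi) :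
    ∃ y : Y, D.pr y g = 2 ∧ ∀ x, D.srefl g x = x - D.pr y x • g := by
  obtain ⟨u, -, k, rfl, h⟩ := srefl_eq_conj hg
  refine ⟨D.actY u (D.αv k), ?_, fun x => ?_⟩
  · rw [pr_actY, aut_inv_apply_self, pr_alpha, D.A_diag]
  · rw [h, aut_mul_apply, aut_mul_apply, sX_apply, map_sub, aut_apply_inv_self, map_zsmul,
      pr_actY]

lemma srefl_apply_self (hg : g ∈ D.Phi) : D.srefl g g = -g := by
  obtain ⟨y, hy, h⟩ := exists_srefl_apply hg
  rw [h, hy, two_smul]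
  abel

lemma actY_srefl_of_pr_eq_zero (hg : g ∈ D.Phi) {m : Y} (hm : D.pr m g = 0) :
    D.actY (D.srefl g) m = m := by
  obtain ⟨y, -, h⟩ := exists_srefl_apply hg
  apply D.pairE.injective
  ext x
  change D.pr _ x = D.pr m x
  rw [pr_actY, srefl_inv hg, h, pr_sub, pr_zsmul, hm, mul_zero, sub_zero]

lemma neg_srefl_mem_invSet (hg : g ∈ D.Phi) {b : X} (hb : b ∈ D.invSet (D.srefl g)) :
    -(D.srefl g b) ∈ D.invSet (D.srefl g) := by
  refine ⟨hb.2, ?_⟩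
  rw [map_neg, srefl_srefl_apply hg]
  exact D.neg_mem_PhiNeg hb.1

/-- Since `b - s_g b` is a nonnegative multiple of `g` and `w g < 0`, `w b > 0` forces
`w (-s_g b) < 0`. -/
lemma neg_srefl_mem_of_mem_invSet_sdiff (hgp : g ∈ D.PhiPos) {w : AddAut X} (hw : w ∈ D.Wg)
    (hwg : w g ∈ D.PhiNeg) {b : X} (hb : b ∈ D.invSet (D.srefl g) \ D.invSet w) :
    -(D.srefl g b) ∈ (D.invSet (D.srefl g) ∩ D.invSet w) \ {g} := by
  obtain ⟨y, -, hform⟩ := exists_srefl_apply hgp.1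
  obtain ⟨hbT, hbw⟩ := hb
  have hnb := neg_srefl_mem_invSet hgp.1 hbT
  have hwb : w b ∈ D.PhiPos := by
    by_contra h
    exact hbw ⟨hbT.1, (D.mem_PhiNeg_iff_notMem_PhiPos (D.apply_mem_Phi hw hbT.1.1)).mpr h⟩
  have hsum : b + -(D.srefl g b) = D.pr y b • g := by rw [hform]; abel
  have hc : 0 ≤ D.pr y b := by
    by_contra! hc
    apply D.add_add_smul_ne_zero hbT.1 hnb.1 hgp (c := -D.pr y b) (by omega)
    rw [hsum, neg_smul, add_neg_cancel]
  refine ⟨⟨hnb, hnb.1, ?_⟩, fun h => hbw ?_⟩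
  · by_contra h
    have hwι : w (-(D.srefl g b)) ∈ D.PhiPos := by
      by_contra h'
      exact h ((D.mem_PhiNeg_iff_notMem_PhiPos (D.apply_mem_Phi hw hnb.1.1)).mpr h')
    apply D.add_add_smul_ne_zero hwb hwι hwg hc
    rw [← map_add, hsum, map_zsmul, smul_neg, add_neg_cancel]
  · have hsb : D.srefl g b = -g := by rw [← neg_neg (D.srefl g b), Set.mem_singleton_iff.mp h]
    rw [← srefl_srefl_apply hgp.1 b, hsb, map_neg, srefl_apply_self hgp.1, neg_neg]
    exact ⟨hgp, hwg⟩

lemma len_mul_srefl_lt (hgp : g ∈ D.PhiPos) {w : AddAut X} (hw : w ∈ D.Wg)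
    (hwg : w g ∈ D.PhiNeg) : D.len (w * D.srefl g) < D.len w := by
  have hs := srefl_mem_Wg hgp.1
  have hfin := (D.invSet_finite hs).inter_of_left (D.invSet w)
  have hgT : g ∈ D.invSet (D.srefl g) ∩ D.invSet w :=
    ⟨⟨hgp, by rw [srefl_apply_self hgp.1]; exact D.neg_mem_PhiNeg hgp⟩, hgp, hwg⟩
  have hlt :
      (D.invSet (D.srefl g) \ D.invSet w).ncard < (D.invSet (D.srefl g) ∩ D.invSet w).ncard :=
    calc _ ≤ ((D.invSet (D.srefl g) ∩ D.invSet w) \ {g}).ncard :=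
          Set.ncard_le_ncard_of_injOn _
            (fun b hb => neg_srefl_mem_of_mem_invSet_sdiff hgp hw hwg hb)
            (fun a _ b _ h => (D.srefl g).injective (neg_injective h)) hfin.sdiff
      _ < _ := Set.ncard_sdiff_singleton_lt_of_mem hgT hfin
  have hmul := D.len_mul hw hs
  rw [srefl_inv hgp.1] at hmul
  have hsplit := Set.ncard_inter_add_ncard_sdiff_eq_ncard (D.invSet w) (D.invSet (D.srefl g))
    (D.invSet_finite hw)
  rw [Set.inter_comm] at hsplit
  rw [hmul, len]
  omega

end Reflections

section MinimalRepresentative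

variable {D}

lemma dompp_spec {lam : Y} (hlam : lam ∈ D.Yplus) :
    D.dompp lam ∈ D.Ypp ∧ ∃ u ∈ D.Wg, D.actY u (D.dompp lam) = lam := by
  have h : ∃ p : AddAut X × Y, p.1 ∈ D.Wg ∧ p.2 ∈ D.Ypp ∧ lam = D.actY p.1 p.2 := hlam
  unfold dompp
  rw [dif_pos h]
  exact ⟨h.choose_spec.2.1, _, h.choose_spec.1, h.choose_spec.2.2.symm⟩

lemma vmin_spec {lam : Y} (hlam : lam ∈ D.Yplus) :
    D.vmin lam ∈ D.Wg ∧ D.actY (D.vmin lam) (D.dompp lam) = lam ∧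
      ∀ w ∈ D.Wg, D.actY w (D.dompp lam) = lam → D.len (D.vmin lam) ≤ D.len w := by
  obtain ⟨u, hu, hul⟩ := (dompp_spec hlam).2
  obtain ⟨v, ⟨hv, hvl⟩, hmin⟩ := (measure D.len).wf.has_min
    {w | w ∈ D.Wg ∧ D.actY w (D.dompp lam) = lam} ⟨u, hu, hul⟩
  have h : ∃ w : AddAut X, w ∈ D.Wg ∧ D.actY w (D.dompp lam) = lam ∧
      ∀ w' : AddAut X, w' ∈ D.Wg → D.actY w' (D.dompp lam) = lam → D.len w ≤ D.len w' :=
    ⟨v, hv, hvl, fun w hw hwl => not_lt.mp (hmin w ⟨hw, hwl⟩)⟩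
  unfold vmin
  rw [dif_pos h]
  exact h.choose_spec

/-- A positive root `b` with `⟨λ, b⟩ = 0` and `v⁻¹ b < 0` would give a reflection fixing `μ`
that shortens `v`. -/
lemma invSet_inv_eq_of_minimal {μ lam : Y} (hμ : μ ∈ D.Ypp) {v : AddAut X} (hv : v ∈ D.Wg)
    (hvμ : D.actY v μ = lam)
    (hmin : ∀ w ∈ D.Wg, D.actY w μ = lam → D.len v ≤ D.len w) :
    D.invSet v⁻¹ = {b | b ∈ D.PhiPos ∧ D.pr lam b < 0} := by
  have hpr : ∀ b, D.pr lam b = D.pr μ (v⁻¹ b) := fun b => by rw [← hvμ, pr_actY]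
  ext b
  constructor
  · rintro ⟨hbp, hbn⟩
    refine ⟨hbp, ?_⟩
    have hle := D.pr_nonneg_of_mem_Ypp hμ hbn.2
    rw [pr_neg, ← hpr] at hle
    refine lt_of_le_of_ne (by omega) fun h0 => ?_
    have hzero : D.pr μ (-(v⁻¹ b)) = 0 := by rw [pr_neg, ← hpr, h0, neg_zero]
    have hfix := actY_srefl_of_pr_eq_zero hbn.1 hzero
    have hlt := len_mul_srefl_lt hbn hv (by
      rw [map_neg, aut_apply_inv_self]
      exact D.neg_mem_PhiNeg hbp)
    have := hmin _ (mul_mem hv (srefl_mem_Wg hbn.1)) (by rw [actY_mul, hfix, hvμ])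
    omega
  · rintro ⟨hbp, hblt⟩
    refine ⟨hbp, (D.mem_PhiNeg_iff_notMem_PhiPos (D.apply_mem_Phi (inv_mem hv) hbp.1)).mpr
      fun hpos => ?_⟩
    have := D.pr_nonneg_of_mem_Ypp hμ hpos.2
    rw [← hpr] at this
    omega

lemma invSet_vmin_inv {lam : Y} (hlam : lam ∈ D.Yplus) :
    D.invSet (D.vmin lam)⁻¹ = {b | b ∈ D.PhiPos ∧ D.pr lam b < 0} :=
  have h := vmin_spec hlam
  invSet_inv_eq_of_minimal (dompp_spec hlam).1 h.1 h.2.1 h.2.2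

end MinimalRepresentative

section RelativeLength

lemma rlen_eq_len_inv_mul_sub_len {v w : AddAut X} (hv : v ∈ D.Wg) (hw : w ∈ D.Wg) :
    D.rlen v w = (D.len (v⁻¹ * w) : ℤ) - D.len v := by
  have h1 : D.len (v⁻¹ * w) = (D.invSet w⁻¹ \ D.invSet v⁻¹).ncard +
      (D.invSet v⁻¹ \ D.invSet w⁻¹).ncard := by
    rw [← len_inv, mul_inv_rev, inv_inv, D.len_mul (inv_mem hw) hv]
  have h2 := Set.ncard_inter_add_ncard_sdiff_eq_ncard (D.invSet v⁻¹) (D.invSet w⁻¹)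
    (D.invSet_finite (inv_mem hv))
  rw [← len, len_inv] at h2
  rw [rlen, h1, ← h2, Set.inter_comm]
  push_cast
  ring

lemma ncard_sub_ncard_eq_rlen_vmin {lam : Y} (hlam : lam ∈ D.Yplus) (w : AddAut X) :
    (({x | x ∈ D.invSet w⁻¹ ∧ 0 ≤ D.pr lam x}).ncard : ℤ) -
        (({x | x ∈ D.invSet w⁻¹ ∧ D.pr lam x < 0}).ncard : ℤ) = D.rlen (D.vmin lam) w := by
  have hpos : {x | x ∈ D.invSet w⁻¹ ∧ 0 ≤ D.pr lam x} = D.invSet w⁻¹ \ D.invSet (D.vmin lam)⁻¹ := by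
    ext x
    simp only [invSet_vmin_inv hlam, Set.mem_ofPred_eq, Set.mem_sdiff, not_and, not_lt]
    exact ⟨fun h => ⟨h.1, fun _ => h.2⟩, fun h => ⟨h.1, h.2 h.1.1⟩⟩
  have hneg : {x | x ∈ D.invSet w⁻¹ ∧ D.pr lam x < 0} =
      D.invSet w⁻¹ ∩ D.invSet (D.vmin lam)⁻¹ := by
    ext x
    simp only [invSet_vmin_inv hlam, Set.mem_ofPred_eq, Set.mem_inter_iff]
    exact ⟨fun h => ⟨h.1, h.1.1, h.2⟩, fun h => ⟨h.1, h.2.2⟩⟩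
  rw [hpos, hneg, rlen]

end RelativeLength

end KM

theorem statement16_general {I X Y : Type*} [Fintype I] [AddCommGroup X] [AddCommGroup Y]
    (D : KM I X Y)
    (Λ : I → X)
    (lam : Y) (hlam : lam ∈ D.Yplus)
    (w : AddAut X) (hw : w ∈ D.Wg) :
    (({x | x ∈ D.invSet (w⁻¹) ∧ 0 ≤ D.pr lam x}).ncard : ℤ) -
        (({x | x ∈ D.invSet (w⁻¹) ∧ D.pr lam x < 0}).ncard : ℤ) =
      D.rlen (D.vmin lam) w ∧
    D.rlen (D.vmin lam) w = (D.len ((D.vmin lam)⁻¹ * w) : ℤ) - (D.len (D.vmin lam) : ℤ) ∧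
    D.alen Λ (lam, w) = 2 * D.ht Λ (D.dompp lam) + D.rlen (D.vmin lam) w := by
  have hsigned := D.ncard_sub_ncard_eq_rlen_vmin hlam w
  refine ⟨hsigned, D.rlen_eq_len_inv_mul_sub_len (KM.vmin_spec hlam).1 hw, ?_⟩
  rw [KM.alen, ← hsigned]

/-- for `λ = v(λ^{++}) ∈ Y⁺` and `w ∈ Wᵛ`, the signed count of inversions
equals `ℓ_{v^λ}(w) = ℓ((v^λ)⁻¹w) − ℓ(v^λ)`, and consequently
`ℓᵃ(π^λ w) = 2ht(λ^{++}) + ℓ_{v^λ}(w)`. -/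
theorem statement16 {I X Y : Type*} [Fintype I] [AddCommGroup X] [AddCommGroup Y]
    (D : KM I X Y)
    (Λ : I → X) (hΛ : D.IsFundWeights Λ)
    (lam : Y) (hlam : lam ∈ D.Yplus)
    (v : AddAut X) (hv : v ∈ D.Wg) (hlv : lam = D.actY v (D.dompp lam))
    (w : AddAut X) (hw : w ∈ D.Wg) :
    (({x | x ∈ D.invSet (w⁻¹) ∧ 0 ≤ D.pr lam x}).ncard : ℤ) -
        (({x | x ∈ D.invSet (w⁻¹) ∧ D.pr lam x < 0}).ncard : ℤ) =
      D.rlen (D.vmin lam) w ∧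
    D.rlen (D.vmin lam) w = (D.len ((D.vmin lam)⁻¹ * w) : ℤ) - (D.len (D.vmin lam) : ℤ) ∧
    D.alen Λ (lam, w) = 2 * D.ht Λ (D.dompp lam) + D.rlen (D.vmin lam) w :=
  statement16_general D Λ lam hlam w hw
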